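/- (Corollary 4, additivity under composition) Fix d ≥ 1 and an onsite symmetry (G, u), and let Ω be a flow (satisfying flow properties (1)–(4)). Let Λ be a finite metric space of sites and let U₁ and U₂ be G-symmetric strict LPUs on Λ, each with operator spreading length ξ. If (∂_{4ξ} A) ∩ (∂_{5ξ} B) = ∅, then Ω^Λ_{A,B}(U₁·U₂) = Ω^Λ_{A,B}(U₁) + Ω^Λ_{A,B}(U₂). -/

import Mathlib

/-!
Stacking reduces the claim to `Ω(U₁ ⊗ U₂) = Ω((U₁U₂) ⊗ 1)` on the doubled lattice `Λ ⊕ Λ`, and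
`U₁ ⊗ U₂ = ((U₁U₂) ⊗ 1) (U₂ᴴ ⊗ U₂)`. The factor `U₂ᴴ ⊗ U₂ = Ψ(Λ)` is the commutator `Ψ(X)` of
`1 ⊗ U₂` with the swap `S_X` of the two copies of `X`, taken at `X = Λ`. Each `Ψ(X)` is supported
within distance `ξ` of `X`, and `Ψ(X ∪ Y) = Ψ(X) · S_X Ψ(Y) S_X` for disjoint `X, Y`. Cutting `Λ`
along `C = ∂_{2ξ}B`, then `C` along `A` and its complement along `B`, writes `U₂ᴴ ⊗ U₂` as a
product of four factors: after conjugation by `(U₁U₂) ⊗ 1` the two coming from `C` are supported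
in `A` or in `Aᶜ` (here the separation of `∂A` and `∂B` is used), and the two others are supported
in `B` or in `Bᶜ`. Flow invariance removes all four, and `Ω(𝟙) = 0`.
-/

open Matrix

/-- A matrix on the many-body space `ι = Λ → Fin d` is supported on `S ⊆ Λ` if its entries
vanish whenever the two configurations differ at a site outside `S`, and otherwise depend
only on the restrictions of the configurations to `S`. -/
def SupportedOn {Λ : Type*} {d : ℕ} (S : Set Λ)
    (M : Matrix (Λ → Fin d) (Λ → Fin d) ℂ) : Prop :=
  (∀ x y, (∃ r ∉ S, x r ≠ y r) → M x y = 0) ∧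
  (∀ x y x' y', (∀ r ∈ S, x r = x' r) → (∀ r ∈ S, y r = y' r) →
    (∀ r ∉ S, x r = y r) → (∀ r ∉ S, x' r = y' r) → M x y = M x' y')

/-- A matrix is unitary if `Mᴴ M = 1 = M Mᴴ`. -/
def IsUnitaryMat {ι : Type*} [Fintype ι] [DecidableEq ι] (M : Matrix ι ι ℂ) : Prop :=
  Mᴴ * M = 1 ∧ M * Mᴴ = 1

/-- The global onsite symmetry operator `U_g`, with entries `∏_r u(g)_{x(r),y(r)}`. -/
def symOp {Λ : Type*} [Fintype Λ] {d : ℕ} {G : Type*}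
    (u : G → Matrix (Fin d) (Fin d) ℂ) (g : G) :
    Matrix (Λ → Fin d) (Λ → Fin d) ℂ :=
  Matrix.of fun x y => ∏ r, u g (x r) (y r)

/-- A matrix is `G`-symmetric if it commutes with every global symmetry operator. -/
def IsGSymm {Λ : Type*} [Fintype Λ] [DecidableEq Λ] {d : ℕ} {G : Type*}
    (u : G → Matrix (Fin d) (Fin d) ℂ)
    (M : Matrix (Λ → Fin d) (Λ → Fin d) ℂ) : Prop :=
  ∀ g, M * symOp u g = symOp u g * M

/-- The `ℓ`-thickened boundary `∂_ℓ S = {r : dist(r,S) ≤ ℓ and dist(r,Λ∖S) ≤ ℓ}`. -/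
def thickBd {Λ : Type*} [MetricSpace Λ] (ℓ : ℝ) (S : Set Λ) : Set Λ :=
  {r | (∃ s ∈ S, dist r s ≤ ℓ) ∧ (∃ s ∈ Sᶜ, dist r s ≤ ℓ)}

/-- A strict locality-preserving unitary with operator spreading length `ξ`: conjugation
maps any operator supported on a single site `r` to one supported in the closed ball of
radius `ξ` around `r`. -/
def IsStrictLPU {Λ : Type*} [Fintype Λ] [DecidableEq Λ] [MetricSpace Λ] {d : ℕ}
    (ξ : ℝ) (U : Matrix (Λ → Fin d) (Λ → Fin d) ℂ) : Prop :=
  IsUnitaryMat U ∧ ∀ (r : Λ) (O : Matrix (Λ → Fin d) (Λ → Fin d) ℂ),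
    SupportedOn {r} O → SupportedOn (Metric.closedBall r ξ) (Uᴴ * O * U)

/-- A flow: an assignment, to every finite lattice `Λ'`, subsets `A, B ⊆ Λ'` and
`G`-symmetric unitary `U` on `Λ' → Fin d`, of a real number `Ω^{Λ'}_{A,B}(U)`, satisfying
the four defining properties of Definition 1. -/
structure LatticeFlow (d : ℕ) (G : Type) [Group G] (u : G → Matrix (Fin d) (Fin d) ℂ) where
  omega : (Λ' : Type) → [Fintype Λ'] → [DecidableEq Λ'] → Set Λ' → Set Λ' →
    Matrix (Λ' → Fin d) (Λ' → Fin d) ℂ → ℝ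
  /-- (1): invariance under left multiplication by `G`-symmetric unitaries supported on
  `A` or on its complement. -/
  left_inv : ∀ (Λ' : Type) [Fintype Λ'] [DecidableEq Λ'] (A B : Set Λ')
    (U V : Matrix (Λ' → Fin d) (Λ' → Fin d) ℂ),
    IsUnitaryMat U → IsGSymm u U → IsUnitaryMat V → IsGSymm u V →
    (SupportedOn A V ∨ SupportedOn Aᶜ V) →
    omega Λ' A B (V * U) = omega Λ' A B U
  /-- (2): invariance under right multiplication by `G`-symmetric unitaries supported on
  `B` or on its complement. -/
  right_inv : ∀ (Λ' : Type) [Fintype Λ'] [DecidableEq Λ'] (A B : Set Λ')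
    (U V : Matrix (Λ' → Fin d) (Λ' → Fin d) ℂ),
    IsUnitaryMat U → IsGSymm u U → IsUnitaryMat V → IsGSymm u V →
    (SupportedOn B V ∨ SupportedOn Bᶜ V) →
    omega Λ' A B (U * V) = omega Λ' A B U
  /-- (3): additivity under stacking (disjoint-union lattices and Kronecker products). -/
  stacking : ∀ (Λ₁ Λ₂ : Type) [Fintype Λ₁] [DecidableEq Λ₁] [Fintype Λ₂] [DecidableEq Λ₂]
    (A₁ B₁ : Set Λ₁) (A₂ B₂ : Set Λ₂)
    (U₁ : Matrix (Λ₁ → Fin d) (Λ₁ → Fin d) ℂ) (U₂ : Matrix (Λ₂ → Fin d) (Λ₂ → Fin d) ℂ),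
    IsUnitaryMat U₁ → IsGSymm u U₁ → IsUnitaryMat U₂ → IsGSymm u U₂ →
    omega (Λ₁ ⊕ Λ₂) (Sum.inl '' A₁ ∪ Sum.inr '' A₂) (Sum.inl '' B₁ ∪ Sum.inr '' B₂)
      (Matrix.reindex (Equiv.sumArrowEquivProdArrow Λ₁ Λ₂ (Fin d)).symm
        (Equiv.sumArrowEquivProdArrow Λ₁ Λ₂ (Fin d)).symm
        (Matrix.kroneckerMap (· * ·) U₁ U₂)) =
      omega Λ₁ A₁ B₁ U₁ + omega Λ₂ A₂ B₂ U₂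
  /-- (4): normalization `Ω_{A,B}(𝟙) = 0`. -/
  norm_one : ∀ (Λ' : Type) [Fintype Λ'] [DecidableEq Λ'] (A B : Set Λ'),
    omega Λ' A B 1 = 0

section Support

variable {Γ : Type*} [Fintype Γ] [DecidableEq Γ] {d : ℕ}

def siteUnit (r : Γ) (a b : Fin d) : Matrix (Γ → Fin d) (Γ → Fin d) ℂ :=
  Matrix.of fun x y => if x r = a ∧ y r = b ∧ ∀ s ≠ r, x s = y s then 1 else 0

theorem siteUnit_supportedOn (r : Γ) (a b : Fin d) : SupportedOn {r} (siteUnit r a b) := by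
  constructor
  · rintro x y ⟨s, hs, hne⟩
    simp only [siteUnit, of_apply, ite_eq_right_iff]
    exact fun h => absurd (h.2.2 s hs) hne
  · intro x y x' y' hx hy hxy hx'y'
    simp only [Set.mem_singleton_iff, forall_eq] at hx hy
    have hxy : ∀ s ≠ r, x s = y s := fun s hs => hxy s hs
    have hx'y' : ∀ s ≠ r, x' s = y' s := fun s hs => hx'y' s hs
    simp only [siteUnit, of_apply, hx, hy, eq_true hxy, eq_true hx'y']

theorem conjTranspose_siteUnit (r : Γ) (a b : Fin d) : (siteUnit r a b)ᴴ = siteUnit r b a := by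
  ext x y
  simp only [siteUnit, conjTranspose_apply, of_apply, apply_ite star, star_one, star_zero]
  refine if_congr ⟨fun ⟨h₁, h₂, h⟩ => ⟨h₂, h₁, fun s hs => (h s hs).symm⟩,
    fun ⟨h₁, h₂, h⟩ => ⟨h₂, h₁, fun s hs => (h s hs).symm⟩⟩ rfl rfl

theorem mul_siteUnit_apply (M : Matrix (Γ → Fin d) (Γ → Fin d) ℂ) (r : Γ) (a b : Fin d)
    (x y : Γ → Fin d) :
    (M * siteUnit r a b) x y = if y r = b then M x (Function.update y r a) else 0 := by
  have key : ∀ z, (z r = a ∧ y r = b ∧ ∀ s ≠ r, z s = y s) ↔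
      z = Function.update y r a ∧ y r = b := fun z => by
    rw [Function.eq_update_iff]; tauto
  rw [mul_apply, Fintype.sum_eq_single (Function.update y r a)]
  · simp only [siteUnit, of_apply, if_congr (key _) rfl rfl, true_and]
    split_ifs <;> simp
  · intro z hz
    simp only [siteUnit, of_apply, if_congr (key _) rfl rfl, hz, false_and, if_false, mul_zero]

theorem siteUnit_mul_apply (M : Matrix (Γ → Fin d) (Γ → Fin d) ℂ) (r : Γ) (a b : Fin d)
    (x y : Γ → Fin d) :
    (siteUnit r a b * M) x y = if x r = a then M (Function.update x r b) y else 0 := by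
  rw [← conjTranspose_conjTranspose (siteUnit r a b * M), conjTranspose_mul,
    conjTranspose_siteUnit, conjTranspose_apply, mul_siteUnit_apply]
  split_ifs <;> simp

open Classical in
theorem SupportedOn.mul_apply_of_disjoint {S T : Set Γ} (hST : Disjoint S T)
    {M N : Matrix (Γ → Fin d) (Γ → Fin d) ℂ} (hM : SupportedOn S M) (hN : SupportedOn T N)
    (x y : Γ → Fin d) : (M * N) x y = M x (S.piecewise y x) * N (S.piecewise y x) y := by
  rw [mul_apply, Fintype.sum_eq_single]
  intro z hz
  obtain ⟨r, hr⟩ : ∃ r, z r ≠ S.piecewise y x r := by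
    by_contra! h
    exact hz (funext h)
  by_cases hrS : r ∈ S
  · rw [Set.piecewise_eq_of_mem _ _ _ hrS] at hr
    rw [hN.1 z y ⟨r, Set.disjoint_left.1 hST hrS, hr⟩, mul_zero]
  · rw [Set.piecewise_eq_of_notMem _ _ _ hrS] at hr
    rw [hM.1 x z ⟨r, hrS, Ne.symm hr⟩, zero_mul]

theorem SupportedOn.commute_of_disjoint {S T : Set Γ} (hST : Disjoint S T)
    {M N : Matrix (Γ → Fin d) (Γ → Fin d) ℂ} (hM : SupportedOn S M) (hN : SupportedOn T N) :
    Commute M N := by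
  classical
  ext x y
  rw [hM.mul_apply_of_disjoint hST hN, hN.mul_apply_of_disjoint hST.symm hM]
  by_cases h : ∃ r ∉ S, r ∉ T ∧ x r ≠ y r
  · obtain ⟨r, hrS, hrT, hne⟩ := h
    rw [hN.1 _ y ⟨r, hrT, by simpa [hrS]⟩, hM.1 _ y ⟨r, hrS, by simpa [hrT]⟩, mul_zero, mul_zero]
  · push Not at h
    have hS : ∀ r ∈ S, r ∉ T := fun r hr => Set.disjoint_left.1 hST hr
    rw [mul_comm]
    congr 1
    · apply hN.2 <;> intro r hr <;> by_cases hrS : r ∈ S <;> simp_all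
    · apply hM.2 <;> intro r hr <;> by_cases hrT : r ∈ T <;> simp_all

theorem apply_eq_zero_of_commute_siteUnit {M : Matrix (Γ → Fin d) (Γ → Fin d) ℂ} {r : Γ}
    (hM : ∀ a b, Commute M (siteUnit r a b)) {x y : Γ → Fin d} (h : x r ≠ y r) : M x y = 0 := by
  have := congrFun (congrFun (hM (y r) (y r)) x) y
  rwa [mul_siteUnit_apply, siteUnit_mul_apply, if_pos rfl, if_neg h, Function.update_eq_self]
    at this

theorem apply_update_of_commute_siteUnit {M : Matrix (Γ → Fin d) (Γ → Fin d) ℂ} {r : Γ}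
    (hM : ∀ a b, Commute M (siteUnit r a b)) {x y : Γ → Fin d} (h : x r = y r) (c : Fin d) :
    M (Function.update x r c) (Function.update y r c) = M x y := by
  have := congrFun (congrFun (hM (x r) c) x) (Function.update y r c)
  rwa [mul_siteUnit_apply, siteUnit_mul_apply, if_pos (Function.update_self r c y), if_pos rfl,
    Function.update_idem, h, Function.update_eq_self, eq_comm] at this

theorem supportedOn_of_forall_commute {S : Set Γ} {M : Matrix (Γ → Fin d) (Γ → Fin d) ℂ}
    (hM : ∀ r ∉ S, ∀ a b, Commute M (siteUnit r a b)) : SupportedOn S M := by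
  classical
  refine ⟨fun x y ⟨r, hr, hne⟩ => apply_eq_zero_of_commute_siteUnit (hM r hr) hne,
    fun x y x' y' hx hy hxy hx'y' => ?_⟩
  have key : ∀ R : Finset Γ, M x y = M (R.piecewise x' x) (R.piecewise y' y) := by
    intro R
    induction R using Finset.induction_on with
    | empty => simp
    | insert r R hr ih =>
      have hp : R.piecewise x' x r = x r := Finset.piecewise_eq_of_notMem _ _ _ hr
      have hq : R.piecewise y' y r = y r := Finset.piecewise_eq_of_notMem _ _ _ hr
      rw [ih, Finset.piecewise_insert, Finset.piecewise_insert]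
      by_cases hrS : r ∈ S
      · rw [← hx r hrS, ← hy r hrS, ← hp, ← hq, Function.update_eq_self, Function.update_eq_self]
      · rw [← hx'y' r hrS, apply_update_of_commute_siteUnit (hM r hrS)
          (hp.trans ((hxy r hrS).trans hq.symm))]
  simpa using key Finset.univ

theorem supportedOn_iff_forall_commute {S : Set Γ} {M : Matrix (Γ → Fin d) (Γ → Fin d) ℂ} :
    SupportedOn S M ↔ ∀ r ∉ S, ∀ a b, Commute M (siteUnit r a b) :=
  ⟨fun hM r hr a b => hM.commute_of_disjoint (Set.disjoint_singleton_right.2 hr)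
    (siteUnit_supportedOn r a b), supportedOn_of_forall_commute⟩

theorem SupportedOn.mono {S T : Set Γ} {M : Matrix (Γ → Fin d) (Γ → Fin d) ℂ}
    (hM : SupportedOn S M) (hST : S ⊆ T) : SupportedOn T M :=
  supportedOn_iff_forall_commute.2 fun r hr =>
    supportedOn_iff_forall_commute.1 hM r fun h => hr (hST h)

theorem supportedOn_one (S : Set Γ) : SupportedOn S (1 : Matrix (Γ → Fin d) (Γ → Fin d) ℂ) :=
  supportedOn_of_forall_commute fun _ _ _ _ => Commute.one_left _

theorem SupportedOn.mul {S : Set Γ} {M N : Matrix (Γ → Fin d) (Γ → Fin d) ℂ}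
    (hM : SupportedOn S M) (hN : SupportedOn S N) : SupportedOn S (M * N) :=
  supportedOn_of_forall_commute fun r hr a b =>
    (supportedOn_iff_forall_commute.1 hM r hr a b).mul_left
      (supportedOn_iff_forall_commute.1 hN r hr a b)

end Support

theorem isUnitaryMat_iff_mem_unitary {ι : Type*} [Fintype ι] [DecidableEq ι]
    {M : Matrix ι ι ℂ} : IsUnitaryMat M ↔ M ∈ unitary (Matrix ι ι ℂ) :=
  Iff.rfl

theorem isUnitaryMat_one {ι : Type*} [Fintype ι] [DecidableEq ι] :
    IsUnitaryMat (1 : Matrix ι ι ℂ) :=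
  ⟨by simp, by simp⟩

section SymUnitary

variable {Γ : Type*} [Fintype Γ] [DecidableEq Γ] {d : ℕ} {G : Type*}
  {u : G → Matrix (Fin d) (Fin d) ℂ}

def symUnitary (u : G → Matrix (Fin d) (Fin d) ℂ) :
    Submonoid (Matrix (Γ → Fin d) (Γ → Fin d) ℂ) :=
  unitary _ ⊓ Submonoid.centralizer (Set.range (symOp u))

theorem mem_symUnitary {M : Matrix (Γ → Fin d) (Γ → Fin d) ℂ} :
    M ∈ symUnitary u ↔ IsUnitaryMat M ∧ IsGSymm u M := by
  simp only [symUnitary, Submonoid.mem_inf, Submonoid.mem_centralizer_iff, Set.forall_mem_range,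
    IsGSymm, isUnitaryMat_iff_mem_unitary, eq_comm]

theorem conjTranspose_mem_symUnitary {M : Matrix (Γ → Fin d) (Γ → Fin d) ℂ}
    (hM : M ∈ symUnitary u) : Mᴴ ∈ symUnitary u := by
  obtain ⟨hu, hG⟩ := mem_symUnitary.1 hM
  refine mem_symUnitary.2 ⟨Unitary.star_mem hu, fun g => ?_⟩
  calc Mᴴ * symOp u g = Mᴴ * symOp u g * (M * Mᴴ) := by rw [hu.2, Matrix.mul_one]
    _ = Mᴴ * (M * symOp u g) * Mᴴ := by rw [hG g]; simp only [Matrix.mul_assoc]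
    _ = symOp u g * Mᴴ := by rw [← Matrix.mul_assoc, hu.1, Matrix.one_mul]

end SymUnitary

theorem IsUnitaryMat.commute_conj {ι : Type*} [Fintype ι] [DecidableEq ι] {W X Y : Matrix ι ι ℂ}
    (hW : IsUnitaryMat W) (h : Commute X Y) : Commute (W * X * Wᴴ) (W * Y * Wᴴ) := by
  have conj_mul : ∀ P Q : Matrix ι ι ℂ, W * P * Wᴴ * (W * Q * Wᴴ) = W * (P * Q) * Wᴴ := by
    intro P Q
    simp only [Matrix.mul_assoc]
    rw [← Matrix.mul_assoc Wᴴ W, hW.1, Matrix.one_mul]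
  exact (conj_mul X Y).trans ((congrArg (W * · * Wᴴ) h.eq).trans (conj_mul Y X).symm)

section LightCone

variable {Γ : Type*} [Fintype Γ] [DecidableEq Γ] {d : ℕ}

def HasLightCone (W : Matrix (Γ → Fin d) (Γ → Fin d) ℂ) (R : Γ → Γ → Prop) : Prop :=
  ∀ r a b, SupportedOn {s | R r s} (Wᴴ * siteUnit r a b * W)

variable {W : Matrix (Γ → Fin d) (Γ → Fin d) ℂ} {R : Γ → Γ → Prop}

theorem HasLightCone.mono {R' : Γ → Γ → Prop} (hW : HasLightCone W R) (hR : ∀ r s, R r s → R' r s) :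
    HasLightCone W R' :=
  fun r a b => (hW r a b).mono fun s => hR r s

theorem hasLightCone_one : HasLightCone (1 : Matrix (Γ → Fin d) (Γ → Fin d) ℂ) (· = ·) :=
  fun r a b => by
    simpa [eq_comm] using siteUnit_supportedOn r a b

theorem HasLightCone.supportedOn_mul_mul_conjTranspose (hW : HasLightCone W R)
    (hu : IsUnitaryMat W) {T : Set Γ} {O : Matrix (Γ → Fin d) (Γ → Fin d) ℂ}
    (hO : SupportedOn T O) : SupportedOn {r | ∃ s ∈ T, R r s} (W * O * Wᴴ) :=
  supportedOn_of_forall_commute fun r hr a b => by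
    have hdisj : Disjoint T {s | R r s} := Set.disjoint_left.2 fun s hs hrs => hr ⟨s, hs, hrs⟩
    have := hu.commute_conj (hO.commute_of_disjoint hdisj (hW r a b))
    have hE : W * (Wᴴ * siteUnit r a b * W) * Wᴴ = siteUnit r a b := by
      simp only [← Matrix.mul_assoc, hu.2, Matrix.one_mul]
      rw [Matrix.mul_assoc, hu.2, Matrix.mul_one]
    rwa [hE] at this

theorem HasLightCone.conjTranspose (hW : HasLightCone W R) (hu : IsUnitaryMat W) :
    HasLightCone Wᴴ (flip R) := fun r a b => by
  simpa [flip] using hW.supportedOn_mul_mul_conjTranspose hu (siteUnit_supportedOn r a b)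

theorem HasLightCone.supportedOn_conjTranspose_mul_mul (hW : HasLightCone W R)
    (hu : IsUnitaryMat W) {T : Set Γ} {O : Matrix (Γ → Fin d) (Γ → Fin d) ℂ}
    (hO : SupportedOn T O) : SupportedOn {r | ∃ s ∈ T, R s r} (Wᴴ * O * W) := by
  have := (hW.conjTranspose hu).supportedOn_mul_mul_conjTranspose
    (Unitary.star_mem (isUnitaryMat_iff_mem_unitary.1 hu)) hO
  rwa [conjTranspose_conjTranspose] at this

theorem HasLightCone.mul {V : Matrix (Γ → Fin d) (Γ → Fin d) ℂ} {R' : Γ → Γ → Prop}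
    (hV : HasLightCone V R) (hW : HasLightCone W R') (hu : IsUnitaryMat W) :
    HasLightCone (V * W) (Relation.Comp R R') := fun r a b => by
  have := hW.supportedOn_conjTranspose_mul_mul hu (hV r a b)
  rw [conjTranspose_mul]
  simp only [Matrix.mul_assoc] at this ⊢
  exact this

end LightCone

theorem IsStrictLPU.hasLightCone {Λ : Type*} [Fintype Λ] [DecidableEq Λ] [MetricSpace Λ]
    {d : ℕ} {ξ : ℝ} {U : Matrix (Λ → Fin d) (Λ → Fin d) ℂ} (hU : IsStrictLPU ξ U) :
    HasLightCone U fun r s => dist s r ≤ ξ :=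
  fun r a b => hU.2 r _ (siteUnit_supportedOn r a b)

theorem IsStrictLPU.hasLightCone_mul {Λ : Type*} [Fintype Λ] [DecidableEq Λ] [MetricSpace Λ]
    {d : ℕ} {ξ₁ ξ₂ : ℝ} {U₁ U₂ : Matrix (Λ → Fin d) (Λ → Fin d) ℂ} (hU₁ : IsStrictLPU ξ₁ U₁)
    (hU₂ : IsStrictLPU ξ₂ U₂) : HasLightCone (U₁ * U₂) fun r s => dist s r ≤ ξ₁ + ξ₂ :=
  (hU₁.hasLightCone.mul hU₂.hasLightCone hU₂.1).mono fun r t ⟨s, hrs, hst⟩ =>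
    (dist_triangle t s r).trans ((add_le_add hst hrs).trans_eq (add_comm ξ₂ ξ₁))

section Stack

variable {Λ₁ Λ₂ : Type*} {d : ℕ}

def stack (M : Matrix (Λ₁ → Fin d) (Λ₁ → Fin d) ℂ) (N : Matrix (Λ₂ → Fin d) (Λ₂ → Fin d) ℂ) :
    Matrix (Λ₁ ⊕ Λ₂ → Fin d) (Λ₁ ⊕ Λ₂ → Fin d) ℂ :=
  Matrix.reindex (Equiv.sumArrowEquivProdArrow Λ₁ Λ₂ (Fin d)).symm
    (Equiv.sumArrowEquivProdArrow Λ₁ Λ₂ (Fin d)).symm (Matrix.kroneckerMap (· * ·) M N)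

theorem stack_apply (M : Matrix (Λ₁ → Fin d) (Λ₁ → Fin d) ℂ)
    (N : Matrix (Λ₂ → Fin d) (Λ₂ → Fin d) ℂ) (x y : Λ₁ ⊕ Λ₂ → Fin d) :
    stack M N x y = M (x ∘ Sum.inl) (y ∘ Sum.inl) * N (x ∘ Sum.inr) (y ∘ Sum.inr) :=
  rfl

theorem conjTranspose_stack (M : Matrix (Λ₁ → Fin d) (Λ₁ → Fin d) ℂ)
    (N : Matrix (Λ₂ → Fin d) (Λ₂ → Fin d) ℂ) : (stack M N)ᴴ = stack Mᴴ Nᴴ := by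
  simp only [stack, conjTranspose_reindex, conjTranspose_kronecker]

variable [Fintype Λ₁] [Fintype Λ₂]

theorem stack_one :
    stack (1 : Matrix (Λ₁ → Fin d) (Λ₁ → Fin d) ℂ) (1 : Matrix (Λ₂ → Fin d) (Λ₂ → Fin d) ℂ) =
      1 := by
  simp only [stack, reindex_apply, one_kronecker_one, submatrix_one_equiv]

theorem symOp_sum_eq_stack {G : Type*} (u : G → Matrix (Fin d) (Fin d) ℂ) (g : G) :
    (symOp u g : Matrix (Λ₁ ⊕ Λ₂ → Fin d) (Λ₁ ⊕ Λ₂ → Fin d) ℂ) =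
      stack (symOp u g) (symOp u g) := by
  ext x y
  exact Fintype.prod_sum_type _

variable [DecidableEq Λ₁] [DecidableEq Λ₂]

theorem stack_mul (M M' : Matrix (Λ₁ → Fin d) (Λ₁ → Fin d) ℂ)
    (N N' : Matrix (Λ₂ → Fin d) (Λ₂ → Fin d) ℂ) :
    stack M N * stack M' N' = stack (M * M') (N * N') := by
  simp only [stack, reindex_apply, submatrix_mul_equiv, mul_kronecker_mul]

theorem IsUnitaryMat.stack {M : Matrix (Λ₁ → Fin d) (Λ₁ → Fin d) ℂ}
    {N : Matrix (Λ₂ → Fin d) (Λ₂ → Fin d) ℂ} (hM : IsUnitaryMat M) (hN : IsUnitaryMat N) :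
    IsUnitaryMat (stack M N) :=
  ⟨by rw [conjTranspose_stack, stack_mul, hM.1, hN.1, stack_one],
    by rw [conjTranspose_stack, stack_mul, hM.2, hN.2, stack_one]⟩

theorem stack_mem_symUnitary {G : Type*} {u : G → Matrix (Fin d) (Fin d) ℂ}
    {M : Matrix (Λ₁ → Fin d) (Λ₁ → Fin d) ℂ} {N : Matrix (Λ₂ → Fin d) (Λ₂ → Fin d) ℂ}
    (hM : M ∈ symUnitary u) (hN : N ∈ symUnitary u) : stack M N ∈ symUnitary u := by
  obtain ⟨hMu, hMG⟩ := mem_symUnitary.1 hM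
  obtain ⟨hNu, hNG⟩ := mem_symUnitary.1 hN
  refine mem_symUnitary.2 ⟨hMu.stack hNu, fun g => ?_⟩
  rw [symOp_sum_eq_stack, stack_mul, stack_mul, hMG g, hNG g]

theorem siteUnit_inl (r : Λ₁) (a b : Fin d) :
    siteUnit (Sum.inl r : Λ₁ ⊕ Λ₂) a b = stack (siteUnit r a b) 1 := by
  ext x y
  simp only [siteUnit, stack_apply, one_apply, of_apply, Sum.forall, funext_iff,
    Function.comp_apply, ne_eq, Sum.inl.injEq, reduceCtorEq, not_false_eq_true, forall_const,
    ite_zero_mul_ite_zero, mul_one]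
  exact if_congr (by tauto) rfl rfl

theorem siteUnit_inr (r : Λ₂) (a b : Fin d) :
    siteUnit (Sum.inr r : Λ₁ ⊕ Λ₂) a b = stack 1 (siteUnit r a b) := by
  ext x y
  simp only [siteUnit, stack_apply, one_apply, of_apply, Sum.forall, funext_iff,
    Function.comp_apply, ne_eq, Sum.inr.injEq, reduceCtorEq, not_false_eq_true, forall_const,
    ite_zero_mul_ite_zero, one_mul]
  exact if_congr (by tauto) rfl rfl

theorem SupportedOn.stack {P : Set Λ₁} {Q : Set Λ₂} {M : Matrix (Λ₁ → Fin d) (Λ₁ → Fin d) ℂ}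
    {N : Matrix (Λ₂ → Fin d) (Λ₂ → Fin d) ℂ} (hM : SupportedOn P M) (hN : SupportedOn Q N) :
    SupportedOn (Sum.inl '' P ∪ Sum.inr '' Q) (stack M N) := by
  refine supportedOn_of_forall_commute fun z hz a b => ?_
  rcases z with r | r
  · have hr : r ∉ P := fun h => hz (Or.inl ⟨r, h, rfl⟩)
    rw [siteUnit_inl, Commute, SemiconjBy, stack_mul, stack_mul,
      (supportedOn_iff_forall_commute.1 hM r hr a b).eq, Matrix.mul_one, Matrix.one_mul]
  · have hr : r ∉ Q := fun h => hz (Or.inr ⟨r, h, rfl⟩)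
    rw [siteUnit_inr, Commute, SemiconjBy, stack_mul, stack_mul,
      (supportedOn_iff_forall_commute.1 hN r hr a b).eq, Matrix.mul_one, Matrix.one_mul]

theorem HasLightCone.stack {V : Matrix (Λ₁ → Fin d) (Λ₁ → Fin d) ℂ}
    {W : Matrix (Λ₂ → Fin d) (Λ₂ → Fin d) ℂ} {R₁ : Λ₁ → Λ₁ → Prop} {R₂ : Λ₂ → Λ₂ → Prop}
    (hV : HasLightCone V R₁) (hW : HasLightCone W R₂) (hVu : IsUnitaryMat V)
    (hWu : IsUnitaryMat W) : HasLightCone (stack V W) (Sum.LiftRel R₁ R₂) := by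
  intro z a b
  rcases z with r | r
  · rw [siteUnit_inl, conjTranspose_stack, stack_mul, stack_mul, Matrix.mul_one, hWu.1]
    refine ((hV r a b).stack (supportedOn_one ∅)).mono ?_
    rintro _ (⟨s, hs, rfl⟩ | ⟨s, hs, rfl⟩)
    · exact Sum.LiftRel.inl hs
    · exact hs.elim
  · rw [siteUnit_inr, conjTranspose_stack, stack_mul, stack_mul, Matrix.mul_one, hVu.1]
    refine ((supportedOn_one ∅).stack (hW r a b)).mono ?_
    rintro _ (⟨s, hs, rfl⟩ | ⟨s, hs, rfl⟩)
    · exact hs.elim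
    · exact Sum.LiftRel.inr hs

end Stack

section SitePerm

variable {Γ : Type*} [Fintype Γ] {d : ℕ}

/-- The operator that moves the state of each site `r` to the site `τ r`. -/
def sitePermOp (τ : Equiv.Perm Γ) : Matrix (Γ → Fin d) (Γ → Fin d) ℂ :=
  Equiv.Perm.permMatrix ℂ (τ⁻¹.arrowCongr (Equiv.refl (Fin d)))

theorem sitePermOp_one : sitePermOp (1 : Equiv.Perm Γ) = (1 : Matrix (Γ → Fin d) _ ℂ) := by
  rw [sitePermOp, inv_one, ← permMatrix_one]
  rfl

theorem conjTranspose_sitePermOp (τ : Equiv.Perm Γ) :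
    (sitePermOp τ : Matrix (Γ → Fin d) _ ℂ)ᴴ = sitePermOp τ⁻¹ := by
  rw [sitePermOp, sitePermOp, conjTranspose_permMatrix]
  rfl

variable [DecidableEq Γ]

theorem sitePermOp_mul (τ τ' : Equiv.Perm Γ) :
    sitePermOp (τ * τ') = (sitePermOp τ * sitePermOp τ' : Matrix (Γ → Fin d) _ ℂ) := by
  rw [sitePermOp, sitePermOp, sitePermOp, ← permMatrix_mul]
  rfl

theorem sitePermOp_mul_mul_conjTranspose (τ : Equiv.Perm Γ)
    (M : Matrix (Γ → Fin d) (Γ → Fin d) ℂ) :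
    sitePermOp τ * M * (sitePermOp τ)ᴴ = M.submatrix (· ∘ τ) (· ∘ τ) := by
  rw [conjTranspose_sitePermOp, sitePermOp, sitePermOp, PEquiv.toMatrix_toPEquiv_mul,
    PEquiv.mul_toMatrix_toPEquiv, submatrix_submatrix]
  rfl

theorem isUnitaryMat_sitePermOp (τ : Equiv.Perm Γ) :
    IsUnitaryMat (sitePermOp τ : Matrix (Γ → Fin d) _ ℂ) := by
  constructor <;> rw [conjTranspose_sitePermOp, ← sitePermOp_mul, ← sitePermOp_one] <;> simp

theorem sitePermOp_mem_symUnitary {G : Type*} (u : G → Matrix (Fin d) (Fin d) ℂ)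
    (τ : Equiv.Perm Γ) : sitePermOp τ ∈ symUnitary u := by
  have hu := isUnitaryMat_sitePermOp (d := d) τ
  refine mem_symUnitary.2 ⟨hu, fun g => ?_⟩
  have hconj : sitePermOp τ * symOp u g * (sitePermOp τ)ᴴ = symOp u g := by
    ext x y
    simp only [sitePermOp_mul_mul_conjTranspose, submatrix_apply, symOp, of_apply,
      Function.comp_apply]
    exact Equiv.prod_comp τ fun r => u g (x r) (y r)
  calc sitePermOp τ * symOp u g = sitePermOp τ * symOp u g * ((sitePermOp τ)ᴴ * sitePermOp τ) := by
        rw [hu.1, Matrix.mul_one]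
    _ = symOp u g * sitePermOp τ := by rw [← Matrix.mul_assoc, hconj]

theorem sitePermOp_mul_siteUnit_mul_conjTranspose (τ : Equiv.Perm Γ) (r : Γ) (a b : Fin d) :
    sitePermOp τ * siteUnit r a b * (sitePermOp τ)ᴴ = siteUnit (τ r) a b := by
  ext x y
  simp only [sitePermOp_mul_mul_conjTranspose, submatrix_apply, siteUnit, of_apply,
    Function.comp_apply]
  refine if_congr (and_congr_right' (and_congr_right' ⟨fun h s hs => ?_,
    fun h s hs => h (τ s) (τ.injective.ne hs)⟩)) rfl rfl
  simpa using h (τ⁻¹ s) fun hs' => hs (by simp [← hs'])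

theorem SupportedOn.sitePermOp_conj {Z : Set Γ} {M : Matrix (Γ → Fin d) (Γ → Fin d) ℂ}
    (hM : SupportedOn Z M) (τ : Equiv.Perm Γ) :
    SupportedOn (τ '' Z) (sitePermOp τ * M * (sitePermOp τ)ᴴ) := by
  refine supportedOn_of_forall_commute fun r hr a b => ?_
  have hr' : τ⁻¹ r ∉ Z := fun h => hr ⟨_, h, by simp⟩
  have := (isUnitaryMat_sitePermOp τ).commute_conj
    (supportedOn_iff_forall_commute.1 hM _ hr' a b)
  simpa [sitePermOp_mul_siteUnit_mul_conjTranspose] using this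

theorem supportedOn_sitePermOp (τ : Equiv.Perm Γ) :
    SupportedOn {r | τ r ≠ r} (sitePermOp τ : Matrix (Γ → Fin d) _ ℂ) := by
  refine supportedOn_of_forall_commute fun r hr a b => ?_
  have hE := sitePermOp_mul_siteUnit_mul_conjTranspose τ r a b
  rw [not_not.1 hr] at hE
  calc sitePermOp τ * siteUnit r a b
      = sitePermOp τ * siteUnit r a b * ((sitePermOp τ)ᴴ * sitePermOp τ) := by
        rw [(isUnitaryMat_sitePermOp τ).1, Matrix.mul_one]
    _ = siteUnit r a b * sitePermOp τ := by rw [← Matrix.mul_assoc, hE]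

end SitePerm

section Swap

variable {Λ : Type*} {d : ℕ}

open Classical in
noncomputable def siteSwap (X : Set Λ) : Equiv.Perm (Λ ⊕ Λ) :=
  Function.Involutive.toPerm
    (Sum.elim (fun r => if r ∈ X then .inr r else .inl r) fun r => if r ∈ X then .inl r else .inr r)
    (by rintro (r | r) <;> by_cases h : r ∈ X <;> simp [h])

open Classical in
theorem siteSwap_inl (X : Set Λ) (r : Λ) :
    siteSwap X (.inl r) = if r ∈ X then .inr r else .inl r :=
  rfl

open Classical in
theorem siteSwap_inr (X : Set Λ) (r : Λ) :
    siteSwap X (.inr r) = if r ∈ X then .inl r else .inr r :=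
  rfl

theorem siteSwap_mul_self (X : Set Λ) : siteSwap X * siteSwap X = 1 := by
  ext z
  rcases z with r | r <;> by_cases h : r ∈ X <;> simp [siteSwap_inl, siteSwap_inr, h]

theorem siteSwap_mul_of_disjoint {X Y : Set Λ} (hXY : Disjoint X Y) :
    siteSwap X * siteSwap Y = siteSwap (X ∪ Y) := by
  ext z
  rcases z with r | r <;> by_cases hX : r ∈ X <;> by_cases hY : r ∈ Y <;>
    simp_all [siteSwap_inl, siteSwap_inr, Set.disjoint_left]

theorem elim_id_siteSwap (X : Set Λ) (z : Λ ⊕ Λ) :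
    Sum.elim id id (siteSwap X z) = Sum.elim id id z := by
  rcases z with r | r <;> by_cases h : r ∈ X <;> simp [siteSwap_inl, siteSwap_inr, h]

theorem mem_of_siteSwap_apply_ne {X : Set Λ} {z : Λ ⊕ Λ} (hz : siteSwap X z ≠ z) :
    Sum.elim id id z ∈ X := by
  by_contra h
  rcases z with r | r <;> simp_all [siteSwap_inl, siteSwap_inr]

variable [Fintype Λ]

theorem conjTranspose_sitePermOp_siteSwap (X : Set Λ) :
    (sitePermOp (siteSwap X) : Matrix (Λ ⊕ Λ → Fin d) _ ℂ)ᴴ = sitePermOp (siteSwap X) := by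
  rw [conjTranspose_sitePermOp, inv_eq_of_mul_eq_one_right (siteSwap_mul_self X)]

variable [DecidableEq Λ]

theorem sitePermOp_siteSwap_mul_self (X : Set Λ) :
    (sitePermOp (siteSwap X) : Matrix (Λ ⊕ Λ → Fin d) _ ℂ) * sitePermOp (siteSwap X) = 1 := by
  rw [← sitePermOp_mul, siteSwap_mul_self, sitePermOp_one]

theorem sitePermOp_siteSwap_univ_conj_stack (M N : Matrix (Λ → Fin d) (Λ → Fin d) ℂ) :
    sitePermOp (siteSwap Set.univ) * stack M N * sitePermOp (siteSwap Set.univ) = stack N M := by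
  have h := sitePermOp_mul_mul_conjTranspose (siteSwap (Set.univ : Set Λ)) (stack M N)
  rw [conjTranspose_sitePermOp_siteSwap] at h
  have hl : ⇑(siteSwap (Set.univ : Set Λ)) ∘ Sum.inl = Sum.inr := funext fun r => by
    simp [siteSwap_inl]
  have hr : ⇑(siteSwap (Set.univ : Set Λ)) ∘ Sum.inr = Sum.inl := funext fun r => by
    simp [siteSwap_inr]
  rw [h]
  ext x y
  rw [submatrix_apply, stack_apply, stack_apply, mul_comm]
  simp only [Function.comp_assoc, hl, hr]

end Swap

theorem HasLightCone.supportedOn_conj_preimage_elim {Λ : Type*} [Fintype Λ] [DecidableEq Λ]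
    {d : ℕ} {V : Matrix (Λ ⊕ Λ → Fin d) (Λ ⊕ Λ → Fin d) ℂ} {R₁ R₂ R : Λ → Λ → Prop}
    (hV : HasLightCone V (Sum.LiftRel R₁ R₂)) (hu : IsUnitaryMat V)
    (h₁ : ∀ r s, R₁ r s → R r s) (h₂ : ∀ r s, R₂ r s → R r s) {P : Set Λ}
    {O : Matrix (Λ ⊕ Λ → Fin d) (Λ ⊕ Λ → Fin d) ℂ} (hO : SupportedOn (Sum.elim id id ⁻¹' P) O) :
    SupportedOn (Sum.elim id id ⁻¹' {r | ∃ s ∈ P, R r s}) (V * O * Vᴴ) := by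
  refine (hV.supportedOn_mul_mul_conjTranspose hu hO).mono ?_
  rintro z ⟨w, hw, hzw⟩
  cases hzw with
  | inl h => exact ⟨_, hw, h₁ _ _ h⟩
  | inr h => exact ⟨_, hw, h₂ _ _ h⟩

section SwapCommutator

variable {Λ : Type*} [Fintype Λ] [DecidableEq Λ] {d : ℕ}

noncomputable def swapCommutator (W : Matrix (Λ → Fin d) (Λ → Fin d) ℂ) (X : Set Λ) :
    Matrix (Λ ⊕ Λ → Fin d) (Λ ⊕ Λ → Fin d) ℂ :=
  stack 1 W * sitePermOp (siteSwap X) * (stack 1 W)ᴴ * sitePermOp (siteSwap X)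

variable {W : Matrix (Λ → Fin d) (Λ → Fin d) ℂ}

theorem swapCommutator_mem_symUnitary {G : Type*} {u : G → Matrix (Fin d) (Fin d) ℂ}
    (hW : W ∈ symUnitary u) (X : Set Λ) : swapCommutator W X ∈ symUnitary u := by
  have hT : stack 1 W ∈ symUnitary u :=
    stack_mem_symUnitary (M := (1 : Matrix (Λ → Fin d) _ ℂ)) (one_mem _) hW
  exact mul_mem (mul_mem (mul_mem hT (sitePermOp_mem_symUnitary u _))
    (conjTranspose_mem_symUnitary hT)) (sitePermOp_mem_symUnitary u _)

theorem swapCommutator_univ (W : Matrix (Λ → Fin d) (Λ → Fin d) ℂ) :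
    swapCommutator W Set.univ = stack Wᴴ W := by
  rw [swapCommutator, Matrix.mul_assoc (stack 1 W), Matrix.mul_assoc (stack 1 W),
    conjTranspose_stack, conjTranspose_one, sitePermOp_siteSwap_univ_conj_stack, stack_mul,
    Matrix.one_mul, Matrix.mul_one]

theorem swapCommutator_union (hW : IsUnitaryMat W) {X Y : Set Λ} (hXY : Disjoint X Y) :
    swapCommutator W (X ∪ Y) = swapCommutator W X *
      (sitePermOp (siteSwap X) * swapCommutator W Y * sitePermOp (siteSwap X)) := by
  have hXY₁ : (sitePermOp (siteSwap (X ∪ Y)) : Matrix (Λ ⊕ Λ → Fin d) _ ℂ) =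
      sitePermOp (siteSwap X) * sitePermOp (siteSwap Y) := by
    rw [← sitePermOp_mul, siteSwap_mul_of_disjoint hXY]
  have hXY₂ : (sitePermOp (siteSwap (X ∪ Y)) : Matrix (Λ ⊕ Λ → Fin d) _ ℂ) =
      sitePermOp (siteSwap Y) * sitePermOp (siteSwap X) := by
    rw [Set.union_comm, ← sitePermOp_mul, siteSwap_mul_of_disjoint hXY.symm]
  have hS : ∀ Z : Matrix (Λ ⊕ Λ → Fin d) _ ℂ,
      sitePermOp (siteSwap X) * (sitePermOp (siteSwap X) * Z) = Z := fun Z => by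
    rw [← Matrix.mul_assoc, sitePermOp_siteSwap_mul_self, Matrix.one_mul]
  have hT : ∀ Z : Matrix (Λ ⊕ Λ → Fin d) _ ℂ, (stack 1 W)ᴴ * (stack 1 W * Z) = Z := fun Z => by
    rw [← Matrix.mul_assoc, conjTranspose_stack, stack_mul, conjTranspose_one, Matrix.one_mul,
      hW.1, stack_one, Matrix.one_mul]
  rw [swapCommutator, swapCommutator, swapCommutator]
  nth_rewrite 1 [hXY₁]
  rw [hXY₂]
  simp only [Matrix.mul_assoc, hS, hT]

theorem swapCommutator_union_of_commute (hW : IsUnitaryMat W) {X Y : Set Λ}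
    (hXY : Disjoint X Y) (h : Commute (sitePermOp (siteSwap X)) (swapCommutator W Y)) :
    swapCommutator W (X ∪ Y) = swapCommutator W X * swapCommutator W Y := by
  rw [swapCommutator_union hW hXY, h.eq, Matrix.mul_assoc, sitePermOp_siteSwap_mul_self,
    Matrix.mul_one]

theorem supportedOn_sitePermOp_siteSwap (X : Set Λ) :
    SupportedOn (Sum.elim id id ⁻¹' X) (sitePermOp (siteSwap X) : Matrix (Λ ⊕ Λ → Fin d) _ ℂ) :=
  (supportedOn_sitePermOp _).mono fun _ => mem_of_siteSwap_apply_ne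

theorem swapCommutator_supportedOn {R : Λ → Λ → Prop} (hW : HasLightCone W R)
    (hu : IsUnitaryMat W) (hR : ∀ r, R r r) (X : Set Λ) :
    SupportedOn (Sum.elim id id ⁻¹' {r | ∃ s ∈ X, R r s}) (swapCommutator W X) := by
  have hT : HasLightCone (stack 1 W) (Sum.LiftRel (· = ·) R) :=
    (hasLightCone_one (Γ := Λ)).stack hW isUnitaryMat_one hu
  have hTST : SupportedOn (Sum.elim id id ⁻¹' {r | ∃ s ∈ X, R r s})
      (stack 1 W * sitePermOp (siteSwap X) * (stack 1 W)ᴴ) :=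
    hT.supportedOn_conj_preimage_elim (isUnitaryMat_one.stack hu) (fun r _ h => h ▸ hR r)
      (fun _ _ h => h) (supportedOn_sitePermOp_siteSwap X)
  exact hTST.mul ((supportedOn_sitePermOp_siteSwap X).mono
    (Set.preimage_mono fun r hr => ⟨r, hr, hR r⟩))

theorem swapCommutator_eq_inter_mul_diff {R : Λ → Λ → Prop} (hW : HasLightCone W R)
    (hu : IsUnitaryMat W) (hR : ∀ r, R r r) {X P : Set Λ}
    (h : Disjoint (X ∩ P) {r | ∃ s ∈ X \ P, R r s}) :
    swapCommutator W X = swapCommutator W (X ∩ P) * swapCommutator W (X \ P) := by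
  conv_lhs => rw [← Set.inter_union_sdiff X P]
  exact swapCommutator_union_of_commute hu Set.disjoint_sdiff_inter.symm
    ((supportedOn_sitePermOp_siteSwap _).commute_of_disjoint (h.preimage _)
      (swapCommutator_supportedOn hW hu hR _))

theorem swapCommutator_univ_eq {R : Λ → Λ → Prop} (hW : HasLightCone W R)
    (hu : IsUnitaryMat W) (hR : ∀ r, R r r) {C P Q : Set Λ}
    (hP : Disjoint (C ∩ P) {r | ∃ s ∈ C \ P, R r s})
    (hQ : Disjoint (Cᶜ ∩ Q) {r | ∃ s ∈ Cᶜ \ Q, R r s}) :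
    swapCommutator W Set.univ =
      swapCommutator W (C ∩ P) * swapCommutator W (C \ P) *
        (sitePermOp (siteSwap C) * swapCommutator W (Cᶜ ∩ Q) * sitePermOp (siteSwap C)) *
        (sitePermOp (siteSwap C) * swapCommutator W (Cᶜ \ Q) * sitePermOp (siteSwap C)) := by
  rw [← Set.union_compl_self C, swapCommutator_union hu disjoint_compl_right,
    swapCommutator_eq_inter_mul_diff hW hu hR hP, swapCommutator_eq_inter_mul_diff hW hu hR hQ]
  simp only [Matrix.mul_assoc]
  rw [← Matrix.mul_assoc (sitePermOp (siteSwap C)) (sitePermOp (siteSwap C)),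
    sitePermOp_siteSwap_mul_self, Matrix.one_mul]

end SwapCommutator

section Geometry

variable {Λ : Type*} [MetricSpace Λ]

def closedNbhd (ℓ : ℝ) (X : Set Λ) : Set Λ :=
  {r | ∃ s ∈ X, dist s r ≤ ℓ}

theorem closedNbhd_mono {ℓ ℓ' : ℝ} (h : ℓ ≤ ℓ') (X : Set Λ) : closedNbhd ℓ X ⊆ closedNbhd ℓ' X :=
  fun _ ⟨s, hs, hd⟩ => ⟨s, hs, hd.trans h⟩

theorem closedNbhd_closedNbhd_subset (ℓ ℓ' : ℝ) (X : Set Λ) :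
    closedNbhd ℓ (closedNbhd ℓ' X) ⊆ closedNbhd (ℓ' + ℓ) X :=
  fun _ ⟨_, ⟨s, hs, hd'⟩, hd⟩ => ⟨s, hs, (dist_triangle _ _ _).trans (add_le_add hd' hd)⟩

theorem thickBd_mono {ℓ ℓ' : ℝ} (h : ℓ ≤ ℓ') (S : Set Λ) : thickBd ℓ S ⊆ thickBd ℓ' S :=
  fun _ ⟨⟨s, hs, hd⟩, ⟨t, ht, hd'⟩⟩ => ⟨⟨s, hs, hd.trans h⟩, ⟨t, ht, hd'.trans h⟩⟩

theorem thickBd_compl (ℓ : ℝ) (S : Set Λ) : thickBd ℓ Sᶜ = thickBd ℓ S := by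
  ext r
  simp only [thickBd, compl_compl, Set.mem_ofPred_eq]
  exact and_comm

theorem closedNbhd_inter_subset {ℓ : ℝ} {C S : Set Λ} (h : Disjoint C (thickBd ℓ S)) :
    closedNbhd ℓ (C ∩ S) ⊆ S := by
  rintro r ⟨c, hc, hcr⟩
  by_contra hr
  exact Set.disjoint_left.1 h hc.1 ⟨⟨c, hc.2, by simpa using dist_nonneg.trans hcr⟩, ⟨r, hr, hcr⟩⟩

theorem closedNbhd_diff_subset {ℓ : ℝ} {C S : Set Λ} (h : Disjoint C (thickBd ℓ S)) :
    closedNbhd ℓ (C \ S) ⊆ Sᶜ :=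
  closedNbhd_inter_subset (S := Sᶜ) (by rwa [thickBd_compl])

end Geometry

theorem swapCommutator_conj_swap_supportedOn {Λ : Type*} [Fintype Λ] [DecidableEq Λ] {d : ℕ}
    {W : Matrix (Λ → Fin d) (Λ → Fin d) ℂ} {R : Λ → Λ → Prop} (hW : HasLightCone W R)
    (hu : IsUnitaryMat W) (hR : ∀ r, R r r) (X Y : Set Λ) :
    SupportedOn (Sum.elim id id ⁻¹' {r | ∃ s ∈ X, R r s})
      (sitePermOp (siteSwap Y) * swapCommutator W X * sitePermOp (siteSwap Y)) := by
  have h := (swapCommutator_supportedOn hW hu hR X).sitePermOp_conj (siteSwap Y)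
  rw [conjTranspose_sitePermOp_siteSwap] at h
  refine h.mono ?_
  rintro _ ⟨z, hz, rfl⟩
  rwa [Set.mem_preimage, elim_id_siteSwap]

theorem swapCommutator_conj_stack_supportedOn {Λ : Type*} [Fintype Λ] [DecidableEq Λ]
    [MetricSpace Λ] {d : ℕ} {V W : Matrix (Λ → Fin d) (Λ → Fin d) ℂ} {ρ ξ : ℝ} (hρ : 0 ≤ ρ)
    (hξ : 0 ≤ ξ) (hV : HasLightCone V fun r s => dist s r ≤ ρ) (hVu : IsUnitaryMat V)
    (hW : HasLightCone W fun r s => dist s r ≤ ξ) (hWu : IsUnitaryMat W) (X : Set Λ) :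
    SupportedOn (Sum.elim id id ⁻¹' closedNbhd (ξ + ρ) X)
      (stack V 1 * swapCommutator W X * (stack V 1)ᴴ) :=
  ((hV.stack hasLightCone_one hVu isUnitaryMat_one).supportedOn_conj_preimage_elim
    (hVu.stack isUnitaryMat_one) (fun _ _ h => h) (fun r _ h => h ▸ by rwa [dist_self])
    (swapCommutator_supportedOn hW hWu (fun r => by rwa [dist_self]) X)).mono
    (Set.preimage_mono (closedNbhd_closedNbhd_subset ρ ξ X))

theorem exists_local_factorization_stack {Λ : Type*} [Fintype Λ] [DecidableEq Λ]
    [MetricSpace Λ] {d : ℕ} {G : Type*} {u : G → Matrix (Fin d) (Fin d) ℂ} {ξ : ℝ} (hξ : 0 ≤ ξ)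
    {U₁ U₂ : Matrix (Λ → Fin d) (Λ → Fin d) ℂ} (hU₁ : IsStrictLPU ξ U₁) (hU₁G : IsGSymm u U₁)
    (hU₂ : IsStrictLPU ξ U₂) (hU₂G : IsGSymm u U₂) {A B : Set Λ}
    (hAB : Disjoint (thickBd (4 * ξ) A) (thickBd (2 * ξ) B)) :
    ∃ L₁ ∈ symUnitary u, ∃ L₂ ∈ symUnitary u, ∃ R₁ ∈ symUnitary u, ∃ R₂ ∈ symUnitary u,
      SupportedOn (Sum.elim id id ⁻¹' A) L₁ ∧ SupportedOn (Sum.elim id id ⁻¹' A)ᶜ L₂ ∧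
      SupportedOn (Sum.elim id id ⁻¹' B) R₁ ∧ SupportedOn (Sum.elim id id ⁻¹' B)ᶜ R₂ ∧
      stack U₁ U₂ = L₁ * L₂ * stack (U₁ * U₂) 1 * R₁ * R₂ := by
  set C := thickBd (2 * ξ) B
  set M := stack (U₁ * U₂) (1 : Matrix (Λ → Fin d) _ ℂ)
  have hU₂s : U₂ ∈ symUnitary u := mem_symUnitary.2 ⟨hU₂.1, hU₂G⟩
  have hU₁₂s : U₁ * U₂ ∈ symUnitary u := mul_mem (mem_symUnitary.2 ⟨hU₁.1, hU₁G⟩) hU₂s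
  have hMs : M ∈ symUnitary u := stack_mem_symUnitary hU₁₂s (one_mem _)
  -- Points of `C` are farther than `4ξ` from `∂A`, points off `C` farther than `2ξ` from `∂B`.
  have gA : closedNbhd (4 * ξ) (C ∩ A) ⊆ A := closedNbhd_inter_subset hAB.symm
  have gAc : closedNbhd (4 * ξ) (C \ A) ⊆ Aᶜ := closedNbhd_diff_subset hAB.symm
  have gB : closedNbhd (2 * ξ) (Cᶜ ∩ B) ⊆ B := closedNbhd_inter_subset disjoint_compl_left
  have gBc : closedNbhd (2 * ξ) (Cᶜ \ B) ⊆ Bᶜ := closedNbhd_diff_subset disjoint_compl_left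
  have hrefl : ∀ r : Λ, dist r r ≤ ξ := fun r => by rwa [dist_self]
  have hL : ∀ X T, closedNbhd (4 * ξ) X ⊆ T →
      SupportedOn (Sum.elim id id ⁻¹' T) (M * swapCommutator U₂ X * Mᴴ) := fun X T hXT =>
    (swapCommutator_conj_stack_supportedOn (by linarith) hξ (hU₁.hasLightCone_mul hU₂)
      (mem_symUnitary.1 hU₁₂s).1 hU₂.hasLightCone hU₂.1 X).mono
      (Set.preimage_mono ((closedNbhd_mono (by linarith) X).trans hXT))
  have hR : ∀ X T, closedNbhd (2 * ξ) X ⊆ T → SupportedOn (Sum.elim id id ⁻¹' T)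
      (sitePermOp (siteSwap C) * swapCommutator U₂ X * sitePermOp (siteSwap C)) := fun X T hXT =>
    (swapCommutator_conj_swap_supportedOn hU₂.hasLightCone hU₂.1 hrefl X C).mono
      (Set.preimage_mono ((closedNbhd_mono (by linarith) X).trans hXT))
  have hLs : ∀ X, M * swapCommutator U₂ X * Mᴴ ∈ symUnitary u := fun X =>
    mul_mem (mul_mem hMs (swapCommutator_mem_symUnitary hU₂s X)) (conjTranspose_mem_symUnitary hMs)
  have hRs : ∀ X, sitePermOp (siteSwap C) * swapCommutator U₂ X * sitePermOp (siteSwap C) ∈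
      symUnitary u := fun X =>
    mul_mem (mul_mem (sitePermOp_mem_symUnitary u _) (swapCommutator_mem_symUnitary hU₂s X))
      (sitePermOp_mem_symUnitary u _)
  refine ⟨_, hLs (C ∩ A), _, hLs (C \ A), _, hRs (Cᶜ ∩ B), _, hRs (Cᶜ \ B), hL _ _ gA,
    by rw [← Set.preimage_compl]; exact hL _ _ gAc, hR _ _ gB,
    by rw [← Set.preimage_compl]; exact hR _ _ gBc, ?_⟩
  have hMc : ∀ Z, Mᴴ * (M * Z) = Z := fun Z => by
    rw [← Matrix.mul_assoc, (mem_symUnitary.1 hMs).1.1, Matrix.one_mul]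
  calc stack U₁ U₂ = M * swapCommutator U₂ Set.univ := by
        rw [swapCommutator_univ, stack_mul, Matrix.mul_assoc, hU₂.1.2, Matrix.mul_one,
          Matrix.one_mul]
    _ = _ := by
        rw [swapCommutator_univ_eq hU₂.hasLightCone hU₂.1 hrefl
          (disjoint_compl_right.mono Set.inter_subset_right
            ((closedNbhd_mono (by linarith) _).trans gAc))
          (disjoint_compl_right.mono Set.inter_subset_right
            ((closedNbhd_mono (by linarith) _).trans gBc))]
        simp only [Matrix.mul_assoc, hMc]

theorem inl_image_union_inr_image_self {Λ : Type*} (P : Set Λ) :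
    Sum.inl '' P ∪ Sum.inr '' P = Sum.elim id id ⁻¹' P := by
  ext (r | r) <;> simp

namespace LatticeFlow

variable {d : ℕ} {G : Type} [Group G] {u : G → Matrix (Fin d) (Fin d) ℂ} (Φ : LatticeFlow d G u)

theorem omega_stack {Λ₁ Λ₂ : Type} [Fintype Λ₁] [DecidableEq Λ₁] [Fintype Λ₂] [DecidableEq Λ₂]
    (A₁ B₁ : Set Λ₁) (A₂ B₂ : Set Λ₂) {U₁ : Matrix (Λ₁ → Fin d) (Λ₁ → Fin d) ℂ}
    {U₂ : Matrix (Λ₂ → Fin d) (Λ₂ → Fin d) ℂ} (hU₁ : U₁ ∈ symUnitary u) (hU₂ : U₂ ∈ symUnitary u) :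
    Φ.omega (Λ₁ ⊕ Λ₂) (Sum.inl '' A₁ ∪ Sum.inr '' A₂) (Sum.inl '' B₁ ∪ Sum.inr '' B₂)
      (stack U₁ U₂) = Φ.omega Λ₁ A₁ B₁ U₁ + Φ.omega Λ₂ A₂ B₂ U₂ :=
  Φ.stacking Λ₁ Λ₂ A₁ B₁ A₂ B₂ U₁ U₂ (mem_symUnitary.1 hU₁).1 (mem_symUnitary.1 hU₁).2
    (mem_symUnitary.1 hU₂).1 (mem_symUnitary.1 hU₂).2

variable {Λ' : Type} [Fintype Λ'] [DecidableEq Λ'] {A B : Set Λ'}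
  {U V : Matrix (Λ' → Fin d) (Λ' → Fin d) ℂ}

theorem omega_mul_left (hU : U ∈ symUnitary u) (hV : V ∈ symUnitary u)
    (hsV : SupportedOn A V ∨ SupportedOn Aᶜ V) : Φ.omega Λ' A B (V * U) = Φ.omega Λ' A B U :=
  Φ.left_inv Λ' A B U V (mem_symUnitary.1 hU).1 (mem_symUnitary.1 hU).2 (mem_symUnitary.1 hV).1
    (mem_symUnitary.1 hV).2 hsV

theorem omega_mul_right (hU : U ∈ symUnitary u) (hV : V ∈ symUnitary u)
    (hsV : SupportedOn B V ∨ SupportedOn Bᶜ V) : Φ.omega Λ' A B (U * V) = Φ.omega Λ' A B U :=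
  Φ.right_inv Λ' A B U V (mem_symUnitary.1 hU).1 (mem_symUnitary.1 hU).2 (mem_symUnitary.1 hV).1
    (mem_symUnitary.1 hV).2 hsV

theorem omega_local_mul_mul_local {L₁ L₂ M R₁ R₂ : Matrix (Λ' → Fin d) (Λ' → Fin d) ℂ}
    (hL₁ : L₁ ∈ symUnitary u) (hL₂ : L₂ ∈ symUnitary u) (hM : M ∈ symUnitary u)
    (hR₁ : R₁ ∈ symUnitary u) (hR₂ : R₂ ∈ symUnitary u) (hsL₁ : SupportedOn A L₁)
    (hsL₂ : SupportedOn Aᶜ L₂) (hsR₁ : SupportedOn B R₁) (hsR₂ : SupportedOn Bᶜ R₂) :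
    Φ.omega Λ' A B (L₁ * L₂ * M * R₁ * R₂) = Φ.omega Λ' A B M := by
  have hMR₁ : M * R₁ ∈ symUnitary u := mul_mem hM hR₁
  have hMR : M * R₁ * R₂ ∈ symUnitary u := mul_mem hMR₁ hR₂
  rw [show L₁ * L₂ * M * R₁ * R₂ = L₁ * (L₂ * (M * R₁ * R₂)) by simp only [Matrix.mul_assoc],
    Φ.omega_mul_left (mul_mem hL₂ hMR) hL₁ (Or.inl hsL₁), Φ.omega_mul_left hMR hL₂ (Or.inr hsL₂),
    Φ.omega_mul_right hMR₁ hR₂ (Or.inr hsR₂), Φ.omega_mul_right hM hR₁ (Or.inl hsR₁)]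

end LatticeFlow

theorem flow_composition_general
    {d : ℕ} {G : Type} [Group G]
    (u : G → Matrix (Fin d) (Fin d) ℂ)
    (Φ : LatticeFlow d G u)
    (Λ : Type) [Fintype Λ] [DecidableEq Λ] [MetricSpace Λ]
    (ξ : ℝ) (hξ : 0 ≤ ξ)
    (U₁ U₂ : Matrix (Λ → Fin d) (Λ → Fin d) ℂ)
    (hU₁ : IsStrictLPU ξ U₁) (hU₁G : IsGSymm u U₁)
    (hU₂ : IsStrictLPU ξ U₂) (hU₂G : IsGSymm u U₂)
    (A B : Set Λ)
    (hsep : thickBd (4 * ξ) A ∩ thickBd (5 * ξ) B = ∅) :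
    Φ.omega Λ A B (U₁ * U₂) = Φ.omega Λ A B U₁ + Φ.omega Λ A B U₂ := by
  have hAB : Disjoint (thickBd (4 * ξ) A) (thickBd (2 * ξ) B) :=
    (Set.disjoint_iff_inter_eq_empty.2 hsep).mono_right (thickBd_mono (by linarith) B)
  obtain ⟨L₁, hL₁, L₂, hL₂, R₁, hR₁, R₂, hR₂, hsL₁, hsL₂, hsR₁, hsR₂, hfac⟩ :=
    exists_local_factorization_stack hξ hU₁ hU₁G hU₂ hU₂G hAB
  have hU₁s : U₁ ∈ symUnitary u := mem_symUnitary.2 ⟨hU₁.1, hU₁G⟩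
  have hU₂s : U₂ ∈ symUnitary u := mem_symUnitary.2 ⟨hU₂.1, hU₂G⟩
  have hstack := Φ.omega_stack A B A B hU₁s hU₂s
  have hstack' := Φ.omega_stack A B A B (mul_mem hU₁s hU₂s) (one_mem _)
  rw [inl_image_union_inr_image_self, inl_image_union_inr_image_self] at hstack hstack'
  rw [← hstack, hfac, Φ.omega_local_mul_mul_local hL₁ hL₂
    (stack_mem_symUnitary (mul_mem hU₁s hU₂s) (one_mem _)) hR₁ hR₂ hsL₁ hsL₂ hsR₁ hsR₂,
    hstack', Φ.norm_one, add_zero]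

/-- Corollary 4 (additivity under composition): if `(∂_{4ξ}A) ∩ (∂_{5ξ}B) = ∅`, then
`Ω_{A,B}(U₁·U₂) = Ω_{A,B}(U₁) + Ω_{A,B}(U₂)` for `G`-symmetric strict LPUs `U₁, U₂`
with operator spreading length `ξ`. -/
theorem flow_composition
    {d : ℕ} (hd : 1 ≤ d) {G : Type} [Group G]
    (u : G → Matrix (Fin d) (Fin d) ℂ)
    (hu_unit : ∀ g, IsUnitaryMat (u g))
    (hu_mul : ∀ g h, u (g * h) = u g * u h)
    (Φ : LatticeFlow d G u)
    (Λ : Type) [Fintype Λ] [DecidableEq Λ] [MetricSpace Λ]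
    (ξ : ℝ) (hξ : 0 ≤ ξ)
    (U₁ U₂ : Matrix (Λ → Fin d) (Λ → Fin d) ℂ)
    (hU₁ : IsStrictLPU ξ U₁) (hU₁G : IsGSymm u U₁)
    (hU₂ : IsStrictLPU ξ U₂) (hU₂G : IsGSymm u U₂)
    (A B : Set Λ)
    (hsep : thickBd (4 * ξ) A ∩ thickBd (5 * ξ) B = ∅) :
    Φ.omega Λ A B (U₁ * U₂) = Φ.omega Λ A B U₁ + Φ.omega Λ A B U₂ :=
  flow_composition_general u Φ Λ ξ hξ U₁ U₂ hU₁ hU₁G hU₂ hU₂G A B hsep
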